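/- Let X be a finite set with |X| = 3n and let F = {F_1, …, F_m} with m ≥ n be a family of 3-element subsets of X. Construct the weighted graph G(X, F) as follows: for each a ∈ X an element vertex v(a) of weight 1; for each F_j a set vertex v(F_j) of weight 1; for each F_j and each a ∈ F_j an edge (v(F_j), v(a)) of weight m − n + 1; a start vertex v_s of weight 0 with an edge (v_s, v(F_j)) of weight 0 for every j; and a dummy vertex d of weight 1 with an edge (v_s, d) of weight 0. Then there exists a covering walk from v_s in G(X, F) with agent count exactly N = 3n + m + 1 if and only if F contains an exact 3-cover of X, i.e., a subfamily F_c ⊆ F with |F_c| = n whose members are pairwise disjoint and whose union is X. -/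

import Mathlib

/-! Strategic deployment: common definitions.

A walk is scanned with a state consisting of the set of already-visited
vertices, the number `curr` of currently available (non-settled) agents, and
the number `add` of additional agents (beyond `N = ∑ v, wV v`) recruited so
far.  Crossing an edge `e` requires `curr ≥ wE e` (topping up `add`
otherwise); the first visit of a vertex `v` settles `wV v` agents there. -/

namespace Deploy

structure St (V : Type*) (α : Type*) where
  visited : Finset V
  curr : α
  add : α

variable {V : Type*} [DecidableEq V] {α : Type*} [AddCommMonoid α] [LinearOrder α] [IsOrderedAddMonoid α] [Sub α]

/-- Scan step for crossing an edge `e`. -/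
def crossEdge (wE : Sym2 V → α) (e : Sym2 V) (s : St V α) : St V α :=
  if s.curr < wE e then ⟨s.visited, wE e, s.add + (wE e - s.curr)⟩ else s

/-- Scan step for visiting a vertex `v` (only first visits have an effect). -/
def visitVtx (wV : V → α) (v : V) (s : St V α) : St V α :=
  if v ∈ s.visited then s
  else if s.curr < wV v then ⟨insert v s.visited, 0, s.add + (wV v - s.curr)⟩
  else ⟨insert v s.visited, s.curr - wV v, s.add⟩

variable {G : SimpleGraph V}

/-- Scanning a walk: alternately cross the next edge and visit the next vertex. -/
def scanWalk (wE : Sym2 V → α) (wV : V → α) : {u t : V} → G.Walk u t → St V α → St V α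
  | _, _, .nil, s => s
  | u, _, .cons (v := v) _ p, s => scanWalk wE wV p (visitVtx wV v (crossEdge wE s(u, v) s))

/-- The agent count of a walk `p` starting at `vs`: the scan starts with
`curr = N = ∑ v, wV v` and `add = 0`, first visiting the start vertex; the
agent count is `N` plus the final value of `add`. -/
def agentCount [Fintype V] (wE : Sym2 V → α) (wV : V → α) {vs t : V} (p : G.Walk vs t) : α :=
  (∑ v, wV v) + (scanWalk wE wV p (visitVtx wV vs ⟨∅, ∑ v, wV v, 0⟩)).add

/-- A walk is covering if every vertex of the graph appears on it. -/
def IsCovering {vs t : V} (p : G.Walk vs t) : Prop := ∀ v : V, v ∈ p.support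

end Deploy

namespace Deploy

/-- Vertices of the graph `G(X, F)` from the 3-Exact-Cover reduction
(no-return variant): an element vertex for each element of `X`, a set vertex
for each of the `m` three-element subsets, a start vertex `v_s`, and a dummy
vertex `d`. -/
inductive XCVtx (A : Type*) (m : ℕ) where
  | elem : A → XCVtx A m
  | setv : Fin m → XCVtx A m
  | start : XCVtx A m
  | dummy : XCVtx A m
deriving DecidableEq

instance (A : Type*) [Fintype A] (m : ℕ) : Fintype (XCVtx A m) := by
  classical
  have e : XCVtx A m ≃ (A ⊕ Fin m) ⊕ (Fin 2) :=
    { toFun := fun v => match v with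
        | .elem a => Sum.inl (Sum.inl a)
        | .setv j => Sum.inl (Sum.inr j)
        | .start => Sum.inr 0
        | .dummy => Sum.inr 1
      invFun := fun v => match v with
        | Sum.inl (Sum.inl a) => .elem a
        | Sum.inl (Sum.inr j) => .setv j
        | Sum.inr ⟨0, _⟩ => .start
        | Sum.inr ⟨1, _⟩ => .dummy
      left_inv := by rintro (a | j | _ | _) <;> rfl
      right_inv := by rintro ((a | j) | ⟨(_ | (_ | k)), hk⟩) <;> first | rfl | omega }
  exact Fintype.ofEquiv _ e.symm

/-- The graph `G(X, F)`: the start vertex is joined to every set vertex and to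
the dummy vertex, and each set vertex `v(F_j)` is joined to the element
vertices of the three elements of `F_j`. -/
def xcGraph {A : Type*} {m : ℕ} (F : Fin m → Finset A) : SimpleGraph (XCVtx A m) :=
  SimpleGraph.fromRel (fun u v =>
    match u, v with
    | .start, .setv _ => True
    | .start, .dummy => True
    | .setv j, .elem a => a ∈ F j
    | _, _ => False)

/-- Edge weights of `G(X, F)`: edges between set vertices and element vertices
have weight `m - n + 1`; all edges incident to the start vertex have weight
`0`. -/
def xcWE (A : Type*) (n m : ℕ) : Sym2 (XCVtx A m) → ℕ :=
  Sym2.lift ⟨fun u v =>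
    match u, v with
    | .setv _, .elem _ => m - n + 1
    | .elem _, .setv _ => m - n + 1
    | _, _ => 0,
    by rintro (a | j | _ | _) (b | k | _ | _) <;> rfl⟩

/-- Vertex weights of `G(X, F)`: the start vertex has weight `0`, every other
vertex has weight `1`. -/
def xcWV (A : Type*) (m : ℕ) : XCVtx A m → ℕ
  | .start => 0
  | _ => 1

end Deploy

/-!
Along the scan, `curr + (weight of the visited vertices) = N + add`. So if the agent count is
`N = 3n + m + 1`, no agent is ever recruited, and whenever an edge `e` is crossed, `w_e` plus the
weight of the vertices visited so far is at most `N`. Apply this to the last crossing of a heavy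
(set–element) edge, of weight `m - n + 1`: afterwards the walk only uses weight-0 edges, which
never lead to a new element vertex, so all element vertices (or, if the walk stops at an element
vertex, all vertices but that one) were visited before it. Counting weights, the set vertices
visited before that crossing are at most `n` many and cover `X`, and `n` triples covering `3n`
points form an exact cover.

Conversely, given an exact cover `F_c`, visit each element through a set vertex of `F_c`, then
every set vertex and `d` straight from `v_s`: each heavy edge is crossed while the visited weight
is at most `|X| + |F_c| = 4n`.
-/

namespace Deploy

open Finset SimpleGraph

section Scan

variable {V : Type*} {G : SimpleGraph V} (wE : Sym2 V → ℕ) (wV : V → ℕ)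

lemma crossEdge_visited (e : Sym2 V) (s : St V ℕ) : (crossEdge wE e s).visited = s.visited := by
  unfold crossEdge; split <;> rfl

lemma le_crossEdge_curr (e : Sym2 V) (s : St V ℕ) : wE e ≤ (crossEdge wE e s).curr := by
  unfold crossEdge
  split_ifs with h
  · exact le_rfl
  · exact not_lt.1 h

lemma crossEdge_curr_add (e : Sym2 V) (s : St V ℕ) :
    (crossEdge wE e s).curr + s.add = s.curr + (crossEdge wE e s).add := by
  unfold crossEdge; split_ifs <;> dsimp only; omega

lemma le_crossEdge_add (e : Sym2 V) (s : St V ℕ) : s.add ≤ (crossEdge wE e s).add := by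
  unfold crossEdge
  split_ifs
  · exact Nat.le_add_right _ _
  · exact le_rfl

lemma crossEdge_of_le {e : Sym2 V} {s : St V ℕ} (h : wE e ≤ s.curr) : crossEdge wE e s = s := by
  rw [crossEdge, if_neg (not_lt.2 h)]

variable [DecidableEq V]

lemma visitVtx_visited (v : V) (s : St V ℕ) :
    (visitVtx wV v s).visited = insert v s.visited := by
  unfold visitVtx
  split_ifs with h <;> simp [h]

lemma visitVtx_curr_add (v : V) (s : St V ℕ) :
    (visitVtx wV v s).curr + ∑ x ∈ (visitVtx wV v s).visited, wV x + s.add =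
      s.curr + ∑ x ∈ s.visited, wV x + (visitVtx wV v s).add := by
  unfold visitVtx
  split_ifs with hv hc
  · rfl
  all_goals simp only [sum_insert hv]; omega

lemma visitVtx_add_of_le {v : V} {s : St V ℕ} (h : v ∉ s.visited → wV v ≤ s.curr) :
    (visitVtx wV v s).add = s.add := by
  unfold visitVtx
  split_ifs with hv hc
  · rfl
  · exact absurd (h hv) (not_le.2 hc)
  · rfl

lemma le_visitVtx_add (v : V) (s : St V ℕ) : s.add ≤ (visitVtx wV v s).add := by
  unfold visitVtx; split_ifs <;> simp

lemma le_scanWalk_add {u t : V} (p : G.Walk u t) (s : St V ℕ) :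
    s.add ≤ (scanWalk wE wV p s).add := by
  induction p generalizing s with
  | nil => exact le_rfl
  | cons h p ih =>
    exact (le_crossEdge_add wE _ s).trans ((le_visitVtx_add wV _ _).trans (ih _))

lemma scanWalk_curr_add {u t : V} (p : G.Walk u t) (s : St V ℕ) :
    (scanWalk wE wV p s).curr + ∑ x ∈ (scanWalk wE wV p s).visited, wV x + s.add =
      s.curr + ∑ x ∈ s.visited, wV x + (scanWalk wE wV p s).add := by
  induction p generalizing s with
  | nil => rfl
  | @cons u v _ h p ih =>
    have hcross := crossEdge_curr_add wE s(u, v) s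
    have hvisit := visitVtx_curr_add wV v (crossEdge wE s(u, v) s)
    have := ih (visitVtx wV v (crossEdge wE s(u, v) s))
    rw [crossEdge_visited] at hvisit
    simp only [scanWalk] at this ⊢
    omega

lemma scanWalk_visited {u t : V} (p : G.Walk u t) {s : St V ℕ} (hu : u ∈ s.visited) :
    (scanWalk wE wV p s).visited = s.visited ∪ p.support.toFinset := by
  induction p generalizing s with
  | nil => simp [scanWalk, hu]
  | @cons u v _ h p ih =>
    have hv : v ∈ (visitVtx wV v (crossEdge wE s(u, v) s)).visited := by simp [visitVtx_visited]
    rw [scanWalk, ih hv, visitVtx_visited, crossEdge_visited]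
    ext x
    simp only [mem_union, mem_insert, List.mem_toFinset,
      Walk.support_cons, List.mem_cons]
    constructor
    · rintro ((rfl | hx) | hx) <;> simp_all
    · rintro (hx | rfl | hx) <;> simp_all

lemma scanWalk_append {u v t : V} (p : G.Walk u v) (q : G.Walk v t) (s : St V ℕ) :
    scanWalk wE wV (p.append q) s = scanWalk wE wV q (scanWalk wE wV p s) := by
  induction p generalizing s with
  | nil => rfl
  | cons h p ih => exact ih _ _

lemma add_le_scanWalk_cons {u v t : V} (h : G.Adj u v) (p : G.Walk v t) (s : St V ℕ) :
    wE s(u, v) + s.add ≤ s.curr + (scanWalk wE wV (.cons h p) s).add := by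
  have := le_crossEdge_curr wE s(u, v) s
  have := crossEdge_curr_add wE s(u, v) s
  have := le_visitVtx_add wV v (crossEdge wE s(u, v) s)
  have := le_scanWalk_add wE wV p (visitVtx wV v (crossEdge wE s(u, v) s))
  simp only [scanWalk]
  omega

lemma scanWalk_add_eq_zero {u t : V} (p : G.Walk u t) {s : St V ℕ} (hs : s.add = 0)
    (hp : ∀ e ∈ p.edges, wE e + ∑ x ∈ s.visited ∪ p.support.toFinset, wV x ≤
      s.curr + ∑ x ∈ s.visited, wV x) :
    (scanWalk wE wV p s).add = 0 := by
  induction p generalizing s with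
  | nil => exact hs
  | @cons u v _ h q ih =>
    have hsupp : insert v s.visited ∪ q.support.toFinset ⊆
        s.visited ∪ (Walk.cons h q).support.toFinset := by
      intro x
      simp only [mem_union, mem_insert, List.mem_toFinset, Walk.support_cons, List.mem_cons]
      rintro ((rfl | hx) | hx) <;> simp_all [q.start_mem_support]
    have hold := sum_le_sum_of_subset (f := wV) (subset_union_left
      (s₁ := s.visited) (s₂ := (Walk.cons h q).support.toFinset))
    have hnew := sum_le_sum_of_subset (f := wV) hsupp
    have hinsert := sum_le_sum_of_subset (f := wV) (union_subset_left hsupp)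
    have huv := hp s(u, v) (by simp)
    rw [scanWalk, crossEdge_of_le wE (by omega)]
    have hadd := visitVtx_add_of_le wV (v := v) (s := s) fun hv => by
      rw [sum_insert hv] at hinsert; omega
    have hcons := visitVtx_curr_add wV v s
    rw [visitVtx_visited] at hcons
    refine ih (by rw [hadd, hs]) fun e he => ?_
    have := hp e (by simp [he])
    rw [visitVtx_visited]
    omega

end Scan

section AgentCount

variable {V : Type*} [DecidableEq V] [Fintype V] {G : SimpleGraph V} (wE : Sym2 V → ℕ)
  (wV : V → ℕ)

lemma visitVtx_init (vs : V) :
    visitVtx wV vs ⟨∅, ∑ x, wV x, 0⟩ = ⟨{vs}, ∑ x, wV x - wV vs, 0⟩ := by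
  rw [visitVtx, if_neg (notMem_empty vs),
    if_neg (not_lt.2 (single_le_sum (fun _ _ => Nat.zero_le _) (mem_univ vs)))]
  rfl

theorem add_sum_support_le_agentCount {vs u v t : V} (p : G.Walk vs u) (h : G.Adj u v)
    (q : G.Walk v t) :
    wE s(u, v) + ∑ x ∈ p.support.toFinset, wV x ≤
      agentCount wE wV (p.append (.cons h q)) := by
  have hvs : wV vs ≤ ∑ x, wV x := single_le_sum (fun _ _ => Nat.zero_le _) (mem_univ vs)
  rw [agentCount, visitVtx_init, scanWalk_append]
  set s : St V ℕ := ⟨{vs}, ∑ x, wV x - wV vs, 0⟩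
  have hcons := scanWalk_curr_add wE wV p s
  rw [scanWalk_visited wE wV p (mem_singleton_self vs),
    union_eq_right.2 (by simp [s, p.start_mem_support])] at hcons
  have hcross := add_le_scanWalk_cons wE wV h q (scanWalk wE wV p s)
  have hs : s.curr + ∑ x ∈ s.visited, wV x = ∑ x, wV x := by
    simp only [s, sum_singleton]; omega
  have hs0 : s.add = 0 := rfl
  omega

theorem agentCount_append_eq_sum {vs u t : V} (p : G.Walk vs u) (q : G.Walk u t)
    (hp : ∀ e ∈ p.edges, wE e + ∑ x ∈ p.support.toFinset, wV x ≤ ∑ x, wV x)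
    (hq : ∀ e ∈ q.edges, wE e = 0) :
    agentCount wE wV (p.append q) = ∑ x, wV x := by
  have hvs : wV vs ≤ ∑ x, wV x := single_le_sum (fun _ _ => Nat.zero_le _) (mem_univ vs)
  set s : St V ℕ := ⟨{vs}, ∑ x, wV x - wV vs, 0⟩
  have hs : s.curr + ∑ x ∈ s.visited, wV x = ∑ x, wV x := by
    simp only [s, sum_singleton]; omega
  have hsupp : s.visited ∪ p.support.toFinset = p.support.toFinset :=
    union_eq_right.2 (by simp [s, p.start_mem_support])
  have hp' := scanWalk_add_eq_zero wE wV p (s := s) rfl fun e he => by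
    rw [hsupp, hs]; exact hp e he
  have hcons := scanWalk_curr_add wE wV p s
  have hq' := scanWalk_add_eq_zero wE wV q (s := scanWalk wE wV p s) hp' fun e he => by
    have := sum_le_univ_sum_of_nonneg (f := wV)
      (s := (scanWalk wE wV p s).visited ∪ q.support.toFinset) (fun _ => Nat.zero_le _)
    rw [hq e he]
    have : s.add = 0 := rfl
    omega
  rw [agentCount, visitVtx_init, scanWalk_append, hq', add_zero]

end AgentCount

section Walks

variable {V : Type*} {G : SimpleGraph V}

lemma exists_eq_append_cons_last (P : Sym2 V → Prop) {x t : V} (p : G.Walk x t)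
    (hP : ∃ e ∈ p.edges, P e) :
    ∃ (u v : V) (p₁ : G.Walk x u) (h : G.Adj u v) (p₂ : G.Walk v t),
      p = p₁.append (.cons h p₂) ∧ P s(u, v) ∧ ∀ e ∈ p₂.edges, ¬ P e := by
  induction p with
  | nil => simp at hP
  | @cons x w t h q ih =>
    by_cases hq : ∃ e ∈ q.edges, P e
    · obtain ⟨u, v, p₁, h', p₂, rfl, huv, hp₂⟩ := ih hq
      exact ⟨u, v, .cons h p₁, h', p₂, rfl, huv, hp₂⟩
    · push Not at hq
      obtain ⟨e, he, hPe⟩ := hP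
      rcases List.mem_cons.1 he with rfl | he
      · exact ⟨x, w, .nil, h, q, rfl, hPe, hq⟩
      · exact absurd hPe (hq e he)

def trip {x y : V} (h : G.Adj x y) : G.Walk x x := .cons h (.cons h.symm .nil)

def bouquet {ι : Type*} {x : V} (f : ι → G.Walk x x) : List ι → G.Walk x x
  | [] => .nil
  | i :: l => (f i).append (bouquet f l)

variable {ι : Type*} {x : V} (f : ι → G.Walk x x)

lemma mem_support_bouquet {y : V} (l : List ι) :
    y ∈ (bouquet f l).support ↔ y = x ∨ ∃ i ∈ l, y ∈ (f i).support := by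
  induction l with
  | nil => simp [bouquet]
  | cons i l ih =>
    rw [bouquet, Walk.mem_support_append_iff, ih]
    constructor
    · rintro (hy | rfl | ⟨k, hk, hy⟩)
      exacts [.inr ⟨i, by simp, hy⟩, .inl rfl, .inr ⟨k, by simp [hk], hy⟩]
    · rintro (rfl | ⟨k, hk, hy⟩)
      · exact .inr (.inl rfl)
      rcases List.mem_cons.1 hk with rfl | hk
      exacts [.inl hy, .inr (.inr ⟨k, hk, hy⟩)]

lemma mem_edges_bouquet {e : Sym2 V} (l : List ι) :
    e ∈ (bouquet f l).edges ↔ ∃ i ∈ l, e ∈ (f i).edges := by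
  induction l with
  | nil => simp [bouquet]
  | cons i l ih => simp [bouquet, Walk.edges_append, ih]

end Walks

theorem card_mul_eq_and_disjoint_of_cover {α ι : Type*} [Fintype α] [DecidableEq α]
    [DecidableEq ι] {F : ι → Finset α} {k : ℕ} {C : Finset ι} (hF : ∀ j ∈ C, #(F j) = k)
    (hcov : ∀ a, ∃ j ∈ C, a ∈ F j) (hle : #C * k ≤ Fintype.card α) :
    #C * k = Fintype.card α ∧ ∀ i ∈ C, ∀ j ∈ C, i ≠ j → Disjoint (F i) (F j) := by
  have hunion : C.biUnion F = univ := eq_univ_of_forall fun a => mem_biUnion.2 (hcov a)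
  have hcard : Fintype.card α ≤ #C * k := by
    rw [← card_univ, ← hunion]; exact card_biUnion_le_card_mul C F k fun j hj => (hF j hj).le
  refine ⟨le_antisymm hle hcard, fun i hi j hj hij => disjoint_left.2 fun x hxi hxj => ?_⟩
  -- `x` is counted twice, so the union would have at most `#C * k - 1` elements.
  have hsub : C.biUnion F ⊆ (F i).erase x ∪ (C.erase i).biUnion F := by
    intro a ha
    obtain ⟨l, hl, hal⟩ := mem_biUnion.1 ha
    by_cases hli : l = i
    · subst hli
      by_cases hax : a = x
      · subst hax
        exact mem_union_right _ (mem_biUnion.2 ⟨j, mem_erase.2 ⟨hij.symm, hj⟩, hxj⟩)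
      · exact mem_union_left _ (mem_erase.2 ⟨hax, hal⟩)
    · exact mem_union_right _ (mem_biUnion.2 ⟨l, mem_erase.2 ⟨hli, hl⟩, hal⟩)
  have h1 := card_le_card hsub
  have h2 := card_union_le ((F i).erase x) ((C.erase i).biUnion F)
  have h3 := card_biUnion_le_card_mul (C.erase i) F k fun l hl => (hF l (mem_of_mem_erase hl)).le
  have h4 : #((F i).erase x) = k - 1 := by rw [card_erase_of_mem hxi, hF i hi]
  have hk : 1 ≤ k := by rw [← hF i hi]; exact card_pos.2 ⟨x, hxi⟩
  have h5 : #C * k = #(C.erase i) * k + k := by rw [← card_erase_add_one hi, add_mul, one_mul]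
  rw [hunion, card_univ] at h1
  omega

section Graph

variable {A : Type*} {m : ℕ}

def XCVtx.equivSum : XCVtx A m ≃ A ⊕ Fin m ⊕ Bool where
  toFun
    | .elem a => .inl a
    | .setv j => .inr (.inl j)
    | .start => .inr (.inr false)
    | .dummy => .inr (.inr true)
  invFun
    | .inl a => .elem a
    | .inr (.inl j) => .setv j
    | .inr (.inr false) => .start
    | .inr (.inr true) => .dummy
  left_inv := by rintro (a | j | _ | _) <;> rfl
  right_inv := by rintro (a | j | _ | _) <;> rfl

variable {n : ℕ}

lemma xcWE_le (e : Sym2 (XCVtx A m)) : xcWE A n m e ≤ m - n + 1 := by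
  induction e using Sym2.ind with
  | h x y => cases x <;> cases y <;> simp [xcWE]

lemma xcWE_start_left (x : XCVtx A m) : xcWE A n m s(.start, x) = 0 := by
  cases x <;> rfl

lemma xcWE_start_right (x : XCVtx A m) : xcWE A n m s(x, .start) = 0 := by
  cases x <;> rfl

variable {F : Fin m → Finset A}

lemma adj_start_setv (j : Fin m) : (xcGraph F).Adj .start (.setv j) := by
  simp [xcGraph]

lemma adj_start_dummy : (xcGraph F).Adj .start .dummy := by
  simp [xcGraph]

lemma adj_setv_elem {j : Fin m} {a : A} (h : a ∈ F j) : (xcGraph F).Adj (.setv j) (.elem a) := by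
  simp [xcGraph, h]

lemma exists_eq_setv_of_adj_elem {x : XCVtx A m} {a : A} (h : (xcGraph F).Adj x (.elem a)) :
    ∃ j, x = .setv j ∧ a ∈ F j := by
  cases x <;> simp_all [xcGraph]

variable [Fintype A] [DecidableEq A]

lemma sum_xcWV (S : Finset (XCVtx A m)) :
    ∑ x ∈ S, xcWV A m x =
      #{a | .elem a ∈ S} + #{j | .setv j ∈ S} + if .dummy ∈ S then 1 else 0 := by
  rw [card_filter, card_filter, ← sum_ite_mem_eq, ← XCVtx.equivSum.symm.sum_comp,
    Fintype.sum_sum_type, Fintype.sum_sum_type, Fintype.sum_bool, add_assoc]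
  congr 2
  by_cases h : XCVtx.dummy ∈ S <;> by_cases h' : XCVtx.start ∈ S <;>
    simp [h, h', XCVtx.equivSum, xcWV]

lemma sum_univ_xcWV : ∑ x, xcWV A m x = Fintype.card A + m + 1 := by
  simp [sum_xcWV]

lemma sum_erase_elem_xcWV (a : A) :
    ∑ x ∈ univ.erase (.elem a), xcWV A m x = Fintype.card A + m := by
  have htotal := add_sum_erase univ (xcWV A m) (mem_univ (.elem a))
  have helem : xcWV A m (.elem a) = 1 := rfl
  rw [sum_univ_xcWV] at htotal
  omega

lemma sum_xcWV_le_of_dummy_notMem {S : Finset (XCVtx A m)} (hS : .dummy ∉ S) :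
    ∑ x ∈ S, xcWV A m x ≤ Fintype.card A + #{j | .setv j ∈ S} := by
  rw [sum_xcWV, if_neg hS, add_zero]
  exact Nat.add_le_add_right (card_le_univ _) _

lemma card_add_card_setv_le_sum_xcWV {S : Finset (XCVtx A m)} (hS : ∀ a, .elem a ∈ S) :
    Fintype.card A + #{j | .setv j ∈ S} ≤ ∑ x ∈ S, xcWV A m x := by
  have hall : ({a | .elem a ∈ S} : Finset A) = univ := filter_true_of_mem fun a _ => hS a
  rw [sum_xcWV, hall, card_univ]
  omega

end Graph

section Reduction

variable {A : Type*} {n m : ℕ} {F : Fin m → Finset A}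

lemma exists_setv_mem_edges {t : XCVtx A m} (p : (xcGraph F).Walk .start t) {a : A}
    (ha : .elem a ∈ p.support) : ∃ j, s(.setv j, .elem a) ∈ p.edges ∧ a ∈ F j := by
  have ha' : .elem a ∈ p.reverse.support := by simpa using ha
  obtain ⟨e, he, hae⟩ := (Walk.mem_support_iff_exists_mem_edges.1 ha').resolve_left nofun
  obtain ⟨y, rfl⟩ := Sym2.mem_iff_exists.1 hae
  rw [Walk.edges_reverse, List.mem_reverse] at he
  obtain ⟨j, rfl, hj⟩ := exists_eq_setv_of_adj_elem (p.adj_of_mem_edges he).symm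
  exact ⟨j, Sym2.eq_swap ▸ he, hj⟩

lemma elem_eq_start_of_mem_support {v t : XCVtx A m} (q : (xcGraph F).Walk v t)
    (hq : ∀ e ∈ q.edges, xcWE A n m e ≠ m - n + 1) {a : A} (ha : .elem a ∈ q.support) :
    .elem a = v := by
  induction q with
  | nil => simpa using ha
  | @cons v w t h q ih =>
    rcases List.mem_cons.1 ha with ha | ha
    · exact ha
    obtain rfl := ih (fun e he => hq e (List.mem_cons_of_mem _ he)) ha
    obtain ⟨j, rfl, -⟩ := exists_eq_setv_of_adj_elem h
    exact absurd rfl (hq _ List.mem_cons_self)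

lemma support_eq_singleton_of_start_elem {a : A} {t : XCVtx A m} (q : (xcGraph F).Walk (.elem a) t)
    (hq : ∀ e ∈ q.edges, xcWE A n m e ≠ m - n + 1) : q.support = [.elem a] := by
  cases q with
  | nil => rfl
  | cons h q =>
    obtain ⟨j, rfl, -⟩ := exists_eq_setv_of_adj_elem h.symm
    exact absurd rfl (hq _ List.mem_cons_self)

def elemTrip {j : Fin m} {a : A} (h : a ∈ F j) : (xcGraph F).Walk .start .start :=
  .cons (adj_start_setv j) (.cons (adj_setv_elem h)
    (.cons (adj_setv_elem h).symm (.cons (adj_start_setv j).symm .nil)))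

variable [Fintype A] [DecidableEq A]

theorem exists_cover_card_le_of_agentCount_eq (hnm : n ≤ m) (hA : Fintype.card A = 3 * n)
    {t : XCVtx A m} (p : (xcGraph F).Walk .start t) (hp : IsCovering p)
    (hcount : agentCount (xcWE A n m) (xcWV A m) p = 3 * n + m + 1) :
    ∃ Fc : Finset (Fin m), #Fc ≤ n ∧ ∀ a, ∃ j ∈ Fc, a ∈ F j := by
  rcases isEmpty_or_nonempty A with hA0 | ⟨⟨a₀⟩⟩
  · exact ⟨∅, by simp, isEmptyElim⟩
  obtain ⟨j₀, hj₀, -⟩ := exists_setv_mem_edges p (hp (.elem a₀))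
  obtain ⟨u, v, p₁, h, p₂, rfl, hheavy, hlight⟩ :=
    exists_eq_append_cons_last (fun e => xcWE A n m e = m - n + 1) p ⟨_, hj₀, rfl⟩
  have hbudget := add_sum_support_le_agentCount (xcWE A n m) (xcWV A m) p₁ h p₂
  rw [hcount, hheavy] at hbudget
  have hmem : ∀ x, x ∈ p₁.support ∨ x ∈ p₂.support := fun x => by
    have := hp x
    rw [Walk.mem_support_append_iff, Walk.support_cons, List.mem_cons] at this
    rcases this with hx | rfl | hx
    exacts [.inl hx, .inl p₁.end_mem_support, .inr hx]
  by_cases hv : ∃ a, v = .elem a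
  · obtain ⟨a, rfl⟩ := hv
    have hsub : univ.erase (.elem a) ⊆ p₁.support.toFinset := fun x hx => by
      have := hmem x
      rw [support_eq_singleton_of_start_elem p₂ hlight] at this
      simp_all
    have hle := sum_le_sum_of_subset (f := xcWV A m) hsub
    rw [sum_erase_elem_xcWV] at hle
    refine ⟨univ, by rw [card_univ, Fintype.card_fin]; omega, fun b => ?_⟩
    obtain ⟨j, -, hj⟩ := exists_setv_mem_edges _ (hp (.elem b))
    exact ⟨j, mem_univ j, hj⟩
  · push Not at hv
    have helem : ∀ a, .elem a ∈ p₁.support := fun a =>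
      (hmem _).resolve_right fun ha => hv a (elem_eq_start_of_mem_support p₂ hlight ha).symm
    have hweight := card_add_card_setv_le_sum_xcWV fun a => List.mem_toFinset.2 (helem a)
    refine ⟨({j | .setv j ∈ p₁.support.toFinset} : Finset (Fin m)), by omega, fun a => ?_⟩
    obtain ⟨j, hj, haj⟩ := exists_setv_mem_edges p₁ (helem a)
    exact ⟨j, by simpa using p₁.fst_mem_support_of_mem_edges hj, haj⟩

theorem exists_covering_walk_of_cover (hnm : n ≤ m) (hA : Fintype.card A = 3 * n)
    (Fc : Finset (Fin m)) (hcard : #Fc = n) (hcov : ∀ a, ∃ j ∈ Fc, a ∈ F j) :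
    ∃ (t : XCVtx A m) (p : (xcGraph F).Walk .start t),
      IsCovering p ∧ agentCount (xcWE A n m) (xcWV A m) p = 3 * n + m + 1 := by
  choose c hcFc hc using hcov
  let w₁ := bouquet (fun a => elemTrip (hc a)) univ.toList
  let w₂ := (trip adj_start_dummy).append
    (bouquet (fun j => trip (adj_start_setv (F := F) j)) (List.finRange m))
  refine ⟨.start, w₁.append w₂, fun x => ?_, ?_⟩
  · cases x <;> simp [w₁, w₂, mem_support_bouquet, elemTrip, trip, Walk.mem_support_append_iff]
  rw [agentCount_append_eq_sum, sum_univ_xcWV, hA]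
  · intro e _
    have hdummy : .dummy ∉ w₁.support.toFinset := by
      simp [w₁, mem_support_bouquet, elemTrip]
    have hsetv : ({j | .setv j ∈ w₁.support.toFinset} : Finset (Fin m)) ⊆ Fc := by
      intro j hj
      obtain ⟨a, rfl⟩ : ∃ a, j = c a := by
        simpa [w₁, mem_support_bouquet, elemTrip] using hj
      exact hcFc a
    have := sum_xcWV_le_of_dummy_notMem hdummy
    have := card_le_card hsetv
    have := xcWE_le (n := n) e
    rw [sum_univ_xcWV]
    omega
  · intro e he
    simp [w₂, mem_edges_bouquet, trip] at he
    rcases he with rfl | rfl | ⟨j, rfl | rfl⟩ <;> simp [xcWE_start_left, xcWE_start_right]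

end Reduction

end Deploy

/-- with `|X| = 3n` and `F` a family of `m ≥ n` three-element
subsets of `X`, the graph `G(X, F)` admits a covering walk from `v_s` with
agent count exactly `N = 3n + m + 1` if and only if `F` contains an exact
3-cover of `X`. -/
theorem xc_reduction_no_return {A : Type*} [Fintype A] [DecidableEq A]
    (n m : ℕ) (hnm : n ≤ m) (hA : Fintype.card A = 3 * n)
    (F : Fin m → Finset A) (hF : ∀ j, (F j).card = 3) :
    (∃ (t : Deploy.XCVtx A m) (p : (Deploy.xcGraph F).Walk .start t),
      Deploy.IsCovering p ∧
      Deploy.agentCount (Deploy.xcWE A n m) (Deploy.xcWV A m) p = 3 * n + m + 1) ↔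
    (∃ Fc : Finset (Fin m), Fc.card = n ∧
      (∀ i ∈ Fc, ∀ j ∈ Fc, i ≠ j → Disjoint (F i) (F j)) ∧
      ∀ a : A, ∃ j ∈ Fc, a ∈ F j) := by
  constructor
  · rintro ⟨t, p, hp, hcount⟩
    obtain ⟨Fc, hle, hFc⟩ := Deploy.exists_cover_card_le_of_agentCount_eq hnm hA p hp hcount
    obtain ⟨hcard, hdisj⟩ :=
      Deploy.card_mul_eq_and_disjoint_of_cover (fun j _ => hF j) hFc (by rw [hA]; omega)
    exact ⟨Fc, by omega, hdisj, hFc⟩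
  · rintro ⟨Fc, hcard, -, hFc⟩
    exact Deploy.exists_covering_walk_of_cover hnm hA Fc hcard hFc
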